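/- Let π be a context adaptive ordering family over Σ and let s and s' be primitive strings of the same length n over Σ such that BWT*(s) = BWT*(s') (both computed with respect to π). Then for every string x with |x| ≤ n, the range of rows of M*(s) prefixed by x equals the range of rows of M*(s') prefixed by x, i.e., Rng_s(x) = Rng_{s'}(x); in particular, the number of occurrences of x as a circular factor of s equals the number of occurrences of x as a circular factor of s'. -/

import Mathlib

/-- The cyclic rotation of `s` by `r`: `s[r+1..n] s[1..r]`. -/
def rot {α : Type*} (s : List α) (r : ℕ) : List α := s.drop r ++ s.take r

/-- A string is primitive if its cyclic rotations are pairwise distinct. -/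
def IsPrimitive {α : Type*} (s : List α) : Prop :=
  ∀ r₁ r₂ : ℕ, r₁ < s.length → r₂ < s.length → rot s r₁ = rot s r₂ → r₁ = r₂

/-- The context adaptive order induced by a family `π` of linear orders on the
alphabet, one for each string (context): `u ≺ v` iff, `x = u[1..k] = v[1..k]`
being the longest common prefix of `u` and `v`, the symbol `u[k+1]` is
`π x`-smaller than `v[k+1]`. -/
def caLt {α : Type*} (π : List α → LinearOrder α) (u v : List α) : Prop :=
  ∃ (k : ℕ) (hu : k < u.length) (hv : k < v.length),
    u.take k = v.take k ∧ (π (u.take k)).lt (u.get ⟨k, hu⟩) (v.get ⟨k, hv⟩)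

/-- The matrix `M*(s)`: an enumeration of the cyclic rotations of `s`
listed in `≺`-increasing order; the `i`-th row is `row i`. -/
structure SortedRotMatrix {α : Type*} (π : List α → LinearOrder α) (s : List α) where
  row : Fin s.length → List α
  row_is_rot : ∀ i, ∃ r : Fin s.length, row i = rot s (r : ℕ)
  rot_is_row : ∀ r : Fin s.length, ∃ i, row i = rot s (r : ℕ)
  sorted : ∀ i j : Fin s.length, i < j → caLt π (row i) (row j)

/-- `Rng M x`: the set of row indices of `M*(s)` whose row has `x` as a prefix. -/
def Rng {α : Type*} [DecidableEq α] {π : List α → LinearOrder α} {s : List α}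
    (M : SortedRotMatrix π s) (x : List α) : Finset (Fin s.length) :=
  Finset.univ.filter (fun i => x <+: M.row i)

/-!
Induction on `|x|`. Rotating one step to the left turns the rotations that begin with `c :: t`
into those that begin with `t` and end with `c`; since the last column is shared, the induction
hypothesis for `t` makes `c :: t` prefix equally many rows of `M` and of `M'`. In the block of rows prefixed by `y`, the rows are sorted by their next symbol in the
order `π y`, so that column is determined on the block by the number of times each symbol `d`
occurs in it, i.e. by the number of rows prefixed by `y ++ [d]`. Hence the blocks of
`y ++ [c]` coincide.
-/

open Finset

section

variable {α : Type*}

namespace List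

theorem append_singleton_prefix_iff {y l : List α} {c : α} :
    y ++ [c] <+: l ↔ y <+: l ∧ l[y.length]? = some c := by
  induction y generalizing l with
  | nil => simp [singleton_prefix_iff_head?_eq_some, head?_eq_getElem?]
  | cons a y ih => cases l <;> simp [ih, and_assoc]

theorem cons_prefix_iff_prefix_rotate_one {c : α} {t l : List α} (h : t.length < l.length) :
    c :: t <+: l ↔ t <+: l.rotate 1 ∧ (l.rotate 1).getLast? = some c := by
  obtain _ | ⟨a, l⟩ := l
  · simp at h
  have ht : t ≠ l ++ [a] := fun he => by simp [he] at h
  simp [prefix_concat_iff, ht, eq_comm, and_comm]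

end List

theorem MonotoneOn.le_of_card_fiber_eq {ι β : Type*} [LinearOrder ι] [LinearOrder β]
    [DecidableEq β] {R : Finset ι} {g h : ι → β} {a : ι} (hg : MonotoneOn g R) (ha : a ∈ R)
    (hmax : ∀ x ∈ R, x ≤ a) (hcard : ∀ b, #{i ∈ R | g i = b} = #{i ∈ R | h i = b}) :
    h a ≤ g a := by
  by_contra! hlt
  have hempty : {i ∈ R | g i = h a} = ∅ := filter_eq_empty_iff.mpr fun i hi hgi =>
    (hg hi ha (hmax i hi)).not_gt (hgi ▸ hlt)
  have hpos : 0 < #{i ∈ R | h i = h a} := card_pos.mpr ⟨a, mem_filter.mpr ⟨ha, rfl⟩⟩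
  rw [← hcard, hempty, card_empty] at hpos
  exact hpos.false

theorem MonotoneOn.eqOn_of_card_fiber_eq {ι β : Type*} [LinearOrder ι] [LinearOrder β]
    [DecidableEq β] {R : Finset ι} {g h : ι → β} (hg : MonotoneOn g R) (hh : MonotoneOn h R)
    (hcard : ∀ b, #{i ∈ R | g i = b} = #{i ∈ R | h i = b}) : Set.EqOn g h R := by
  induction R using Finset.induction_on_max with
  | empty => simp
  | insert a R hlt ih =>
    have hmax : ∀ x ∈ insert a R, x ≤ a := by
      simpa [or_imp, forall_and] using fun x hx => (hlt x hx).le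
    have hga : g a = h a := le_antisymm
      (hh.le_of_card_fiber_eq (mem_insert_self a R) hmax fun b => (hcard b).symm)
      (hg.le_of_card_fiber_eq (mem_insert_self a R) hmax hcard)
    have haR : a ∉ R := fun ha => (hlt a ha).false
    have hcardR : ∀ b, #{i ∈ R | g i = b} = #{i ∈ R | h i = b} := by
      intro b
      have := hcard b
      rw [filter_insert, filter_insert, hga] at this
      split_ifs at this <;> simpa [haR] using this
    have hR := ih (hg.mono (by simp)) (hh.mono (by simp)) hcardR
    rw [coe_insert]
    exact Set.forall_insert_of_forall (fun x hx => hR hx) hga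

theorem rot_eq_rotate {s : List α} {r : ℕ} (hr : r ≤ s.length) : rot s r = s.rotate r :=
  (List.rotate_eq_drop_append_take hr).symm

theorem caLt_irrefl (π : List α → LinearOrder α) (u : List α) : ¬ caLt π u u := by
  rintro ⟨k, _, _, _, hlt⟩
  let := π (u.take k)
  exact lt_irrefl _ hlt

theorem caLt.getElem_le {π : List α → LinearOrder α} {u v y : List α} (h : caLt π u v)
    (hu : y <+: u) (hv : y <+: v) (hyu : y.length < u.length) (hyv : y.length < v.length) :
    (π y).le u[y.length] v[y.length] := by
  obtain ⟨k, hku, hkv, htake, hlt⟩ := h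
  let := π y
  rcases lt_trichotomy k y.length with hk | rfl | hk
  · have huv : u[k] = v[k] := (hu.getElem hk).symm.trans (hv.getElem hk)
    simp only [List.get_eq_getElem, huv] at hlt
    let := π (u.take k)
    exact absurd hlt (lt_irrefl _)
  · rw [← List.prefix_iff_eq_take.mp hu] at hlt
    exact hlt.le
  · have huv : u[y.length] = v[y.length] := by
      simpa [List.getElem?_take, hk, List.getElem?_eq_getElem hyu,
        List.getElem?_eq_getElem hyv] using congrArg (·[y.length]?) htake
    exact huv.le

theorem card_filter_cons_prefix_rotate [DecidableEq α] (s : List α) (c : α) {t : List α}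
    (ht : t.length < s.length) :
    #{r : Fin s.length | c :: t <+: s.rotate r}
      = #{r : Fin s.length | t <+: s.rotate r ∧ (s.rotate r).getLast? = some c} := by
  have : NeZero s.length := ⟨by omega⟩
  refine card_equiv (Equiv.addRight 1) fun r => ?_
  have hrot : s.rotate ↑(r + 1) = (s.rotate r).rotate 1 := by
    rw [Fin.val_add, Fin.val_one', Nat.add_mod_mod, List.rotate_mod, List.rotate_rotate]
  simp only [mem_filter, mem_univ, true_and, Equiv.coe_addRight, hrot]
  exact List.cons_prefix_iff_prefix_rotate_one (by simpa using ht)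

namespace SortedRotMatrix

variable {π : List α → LinearOrder α} {s : List α} (M : SortedRotMatrix π s)

theorem row_injective : Function.Injective M.row := by
  intro i j hij
  by_contra hne
  rcases lt_or_gt_of_ne hne with h | h
  · exact caLt_irrefl π _ (hij ▸ M.sorted i j h)
  · exact caLt_irrefl π _ (hij ▸ M.sorted j i h)

theorem exists_row_eq_rotate (i : Fin s.length) : ∃ r : Fin s.length, M.row i = s.rotate r := by
  obtain ⟨r, hr⟩ := M.row_is_rot i
  exact ⟨r, hr.trans (rot_eq_rotate Fin.is_le')⟩

theorem length_row (i : Fin s.length) : (M.row i).length = s.length := by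
  obtain ⟨r, hr⟩ := M.exists_row_eq_rotate i
  rw [hr, List.length_rotate]

noncomputable def rotIndex : Fin s.length ≃ Fin s.length :=
  Equiv.ofBijective (fun i => (M.exists_row_eq_rotate i).choose) <|
    Finite.injective_iff_bijective.mp fun i j hij => M.row_injective <| by
      rw [(M.exists_row_eq_rotate i).choose_spec, (M.exists_row_eq_rotate j).choose_spec]
      exact congrArg _ (congrArg _ hij)

theorem row_eq_rotate_rotIndex (i : Fin s.length) : M.row i = s.rotate (M.rotIndex i) :=
  (M.exists_row_eq_rotate i).choose_spec

theorem card_filter_row (P : List α → Prop) [DecidablePred P] :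
    #{i | P (M.row i)} = #{r : Fin s.length | P (s.rotate r)} :=
  card_equiv M.rotIndex fun i => by simp [M.row_eq_rotate_rotIndex]

theorem getD_row_le_getD_row {y : List α} (hy : y.length < s.length) (d : α)
    {i j : Fin s.length} (hij : i ≤ j) (hi : y <+: M.row i) (hj : y <+: M.row j) :
    (π y).le ((M.row i).getD y.length d) ((M.row j).getD y.length d) := by
  have hyi : y.length < (M.row i).length := M.length_row i ▸ hy
  have hyj : y.length < (M.row j).length := M.length_row j ▸ hy
  rw [List.getD_eq_getElem _ _ hyi, List.getD_eq_getElem _ _ hyj]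
  rcases hij.lt_or_eq with h | rfl
  · exact (M.sorted i j h).getElem_le hi hj hyi hyj
  · exact (π y).le_refl _

end SortedRotMatrix

section Rng

variable [DecidableEq α] {π : List α → LinearOrder α} {s s' : List α}

theorem mem_Rng {M : SortedRotMatrix π s} {x : List α} {i : Fin s.length} :
    i ∈ Rng M x ↔ x <+: M.row i := by
  simp [Rng]

theorem card_Rng (M : SortedRotMatrix π s) (x : List α) :
    #(Rng M x) = #{r : Fin s.length | x <+: s.rotate r} :=
  M.card_filter_row _

theorem card_Rng_eq_card_filter_range (M : SortedRotMatrix π s) (x : List α) :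
    #(Rng M x) = #{j ∈ range s.length | x <+: rot s j} := by
  rw [card_Rng, card_filter, card_filter, ← Fin.sum_univ_eq_sum_range]
  simp only [rot_eq_rotate Fin.is_le']

variable (hlen : s.length = s'.length) (M : SortedRotMatrix π s) (M' : SortedRotMatrix π s')

theorem card_Rng_cons_eq
    (hbwt : ∀ i : Fin s.length, (M.row i).getLast? = (M'.row (Fin.cast hlen i)).getLast?)
    {t : List α} (ht : ∀ i, i ∈ Rng M t ↔ Fin.cast hlen i ∈ Rng M' t)
    (htl : t.length < s.length) (c : α) :
    #(Rng M (c :: t)) = #(Rng M' (c :: t)) := by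
  rw [card_Rng, card_Rng, card_filter_cons_prefix_rotate s c htl,
    card_filter_cons_prefix_rotate s' c (hlen ▸ htl),
    ← M.card_filter_row fun l => t <+: l ∧ l.getLast? = some c,
    ← M'.card_filter_row fun l => t <+: l ∧ l.getLast? = some c]
  refine card_equiv (finCongr hlen) fun i => ?_
  simpa [mem_Rng, hbwt i] using and_congr_left' (ht i)

theorem mem_Rng_append_singleton_iff {y : List α} (hyl : y.length < s.length)
    (hy : ∀ i, i ∈ Rng M y ↔ Fin.cast hlen i ∈ Rng M' y)
    (hcard : ∀ d, #(Rng M (y ++ [d])) = #(Rng M' (y ++ [d]))) (c : α) (i : Fin s.length) :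
    i ∈ Rng M (y ++ [c]) ↔ Fin.cast hlen i ∈ Rng M' (y ++ [c]) := by
  let := π y
  let g i := (M.row i).getD y.length c
  let h i := (M'.row (Fin.cast hlen i)).getD y.length c
  have hyl' : y.length < s'.length := hlen ▸ hyl
  have hg_mem : ∀ i d, i ∈ Rng M (y ++ [d]) ↔ i ∈ Rng M y ∧ g i = d := fun i d => by
    simp [mem_Rng, List.append_singleton_prefix_iff, g, List.getD_eq_getElem?_getD,
      (M.row i).getElem?_eq_getElem (M.length_row i ▸ hyl)]
  have hh_mem : ∀ i d, Fin.cast hlen i ∈ Rng M' (y ++ [d]) ↔ i ∈ Rng M y ∧ h i = d :=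
    fun i d => by
    rw [hy i]
    simp [mem_Rng, List.append_singleton_prefix_iff, h, List.getD_eq_getElem?_getD,
      (M'.row _).getElem?_eq_getElem (M'.length_row (Fin.cast hlen i) ▸ hyl')]
  have hg : MonotoneOn g (Rng M y) := fun i hi j hj hij =>
    M.getD_row_le_getD_row hyl c hij (mem_Rng.mp hi) (mem_Rng.mp hj)
  have hh : MonotoneOn h (Rng M y) := fun i hi j hj hij =>
    M'.getD_row_le_getD_row hyl' c hij (mem_Rng.mp ((hy i).mp hi)) (mem_Rng.mp ((hy j).mp hj))
  have hfiber : ∀ d, #{i ∈ Rng M y | g i = d} = #{i ∈ Rng M y | h i = d} := fun d =>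
    calc #{i ∈ Rng M y | g i = d} = #(Rng M (y ++ [d])) := by
          congr 1; ext i; rw [mem_filter, hg_mem]
      _ = #(Rng M' (y ++ [d])) := hcard d
      _ = #{i ∈ Rng M y | h i = d} :=
          (card_equiv (finCongr hlen) fun i => by rw [mem_filter, finCongr_apply, hh_mem]).symm
  have hgh := hg.eqOn_of_card_fiber_eq hh hfiber
  rw [hg_mem, hh_mem]
  exact and_congr_right fun hi => by rw [hgh hi]

theorem mem_Rng_iff_of_getLast?_eq
    (hbwt : ∀ i : Fin s.length, (M.row i).getLast? = (M'.row (Fin.cast hlen i)).getLast?)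
    {x : List α} (hx : x.length ≤ s.length) :
    ∀ i, i ∈ Rng M x ↔ Fin.cast hlen i ∈ Rng M' x := by
  induction hm : x.length generalizing x with
  | zero => simp [List.eq_nil_of_length_eq_zero hm, mem_Rng]
  | succ m ih =>
    have hcard : ∀ z : List α, z.length = m + 1 → #(Rng M z) = #(Rng M' z)
      | c :: t, hz => by
        have ht : t.length = m := by simpa using hz
        exact card_Rng_cons_eq hlen M M' hbwt (ih (by omega) ht) (by omega) c
    obtain rfl | ⟨y, c, rfl⟩ := x.eq_nil_or_concat'
    · simp at hm
    simp only [List.length_append, List.length_singleton] at hm hx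
    have hyl : y.length = m := by omega
    exact mem_Rng_append_singleton_iff hlen M M' (by omega) (ih (by omega) hyl)
      (fun d => hcard _ (by simpa using hyl)) c

end Rng

end

theorem rng_eq_of_bwt_eq_general {α : Type*} [DecidableEq α]
    (π : List α → LinearOrder α) (s s' : List α) (hlen : s.length = s'.length)
    (M : SortedRotMatrix π s) (M' : SortedRotMatrix π s')
    (hbwt : ∀ i : Fin s.length,
      (M.row i).getLast? = (M'.row (Fin.cast hlen i)).getLast?) :
    ∀ x : List α, x.length ≤ s.length →
      (∀ i : Fin s.length, i ∈ Rng M x ↔ Fin.cast hlen i ∈ Rng M' x) ∧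
      ((Finset.range s.length).filter (fun j => x <+: rot s j)).card
        = ((Finset.range s'.length).filter (fun j => x <+: rot s' j)).card := by
  intro x hx
  have hagree := mem_Rng_iff_of_getLast?_eq hlen M M' hbwt hx
  refine ⟨hagree, ?_⟩
  rw [← card_Rng_eq_card_filter_range M, ← card_Rng_eq_card_filter_range M']
  exact card_equiv (finCongr hlen) hagree

/-- If two primitive strings of the same length have the same context adaptive
BWT (w.r.t. the same family `π`), then for every string `x` the range of rows
prefixed by `x` is the same in the two matrices; in particular `x` has the same
number of occurrences as a circular factor of `s` and of `s'`. -/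
theorem rng_eq_of_bwt_eq {α : Type*} [Fintype α] [Nonempty α] [DecidableEq α]
    (π : List α → LinearOrder α) (s s' : List α) (hlen : s.length = s'.length)
    (hp : IsPrimitive s) (hp' : IsPrimitive s')
    (M : SortedRotMatrix π s) (M' : SortedRotMatrix π s')
    (hbwt : ∀ i : Fin s.length,
      (M.row i).getLast? = (M'.row (Fin.cast hlen i)).getLast?) :
    ∀ x : List α, x.length ≤ s.length →
      (∀ i : Fin s.length, i ∈ Rng M x ↔ Fin.cast hlen i ∈ Rng M' x) ∧
      ((Finset.range s.length).filter (fun j => x <+: rot s j)).card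
        = ((Finset.range s'.length).filter (fun j => x <+: rot s' j)).card :=
  rng_eq_of_bwt_eq_general π s s' hlen M M' hbwt
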